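/- Let σ = ⊕[π_1,…,π_r] with r ≥ 2, where each π_k is a nonempty ⊕-indecomposable permutation, let p = (p_1,…,p_n) be a pin representation of σ, and let i_0 be the index of the child containing p_1. Then every child with index different from i_0 is read in one piece by p. -/

import Mathlib

namespace PinStmt

abbrev Point : Type := ℝ × ℝ

inductive Letter : Type
  | n1 | n2 | n3 | n4 | U | D | L | R
deriving DecidableEq

def Letter.isNum : Letter → Bool
  | .n1 | .n2 | .n3 | .n4 => true
  | _ => false

/-- `c` is one of the numeral letters 1,2,3,4. -/
def Letter.IsNumeral (c : Letter) : Prop := c.isNum = true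

/-- `c` is one of the direction letters U,D,L,R. -/
def Letter.IsDirection (c : Letter) : Prop := c.isNum = false

/-- `q i` lies strictly above all of `q 0, …, q (i-1)`. -/
def AboveAll (q : ℕ → Point) (i : ℕ) : Prop := ∀ j < i, (q j).2 < (q i).2
def BelowAll (q : ℕ → Point) (i : ℕ) : Prop := ∀ j < i, (q i).2 < (q j).2
def RightAll (q : ℕ → Point) (i : ℕ) : Prop := ∀ j < i, (q j).1 < (q i).1
def LeftAll  (q : ℕ → Point) (i : ℕ) : Prop := ∀ j < i, (q i).1 < (q j).1

/-- The vertical line through `q i` strictly separates `q (i-1)` from `{q j | j < i-1}`. -/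
def VLineSep (q : ℕ → Point) (i : ℕ) : Prop :=
  ((q (i - 1)).1 < (q i).1 ∧ ∀ j < i - 1, (q i).1 < (q j).1) ∨
  ((q i).1 < (q (i - 1)).1 ∧ ∀ j < i - 1, (q j).1 < (q i).1)

/-- The horizontal line through `q i` strictly separates `q (i-1)` from `{q j | j < i-1}`. -/
def HLineSep (q : ℕ → Point) (i : ℕ) : Prop :=
  ((q (i - 1)).2 < (q i).2 ∧ ∀ j < i - 1, (q i).2 < (q j).2) ∨
  ((q i).2 < (q (i - 1)).2 ∧ ∀ j < i - 1, (q j).2 < (q i).2)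

/-- Separation condition for the pin `q i`. -/
def SepCond (q : ℕ → Point) (i : ℕ) : Prop := VLineSep q i ∨ HLineSep q i

/-- Independence condition: neither line through `q i` splits `{q j | j < i}` in two
nonempty parts. -/
def IndepCond (q : ℕ → Point) (i : ℕ) : Prop :=
  ¬((∃ j < i, (q j).1 < (q i).1) ∧ (∃ j < i, (q i).1 < (q j).1)) ∧
  ¬((∃ j < i, (q j).2 < (q i).2) ∧ (∃ j < i, (q i).2 < (q j).2))

/-- `q i` lies outside the bounding box of `{q j | j < i}`. -/
def OutsideBox (q : ℕ → Point) (i : ℕ) : Prop :=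
  RightAll q i ∨ LeftAll q i ∨ AboveAll q i ∨ BelowAll q i

/-- `(q 0, …, q (m-1))` is a pin sequence. -/
def IsPinSeq (q : ℕ → Point) (m : ℕ) : Prop :=
  (∀ i < m, ∀ j < m, i ≠ j → (q i).1 ≠ (q j).1 ∧ (q i).2 ≠ (q j).2) ∧
  (∀ i, 1 ≤ i → i < m → OutsideBox q i ∧ (SepCond q i ∨ IndepCond q i))

/-- `(p 0, …, p (n-1))` is a pin representation of `σ`, where `f` sends the time index of a
pin to the position (index) of the corresponding point in the diagram of `σ`. -/
def IsPinReprWith {n : ℕ} (σ : Equiv.Perm (Fin n)) (p : ℕ → Point)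
    (f : Fin n ≃ Fin n) : Prop :=
  IsPinSeq p n ∧ ∀ j k : Fin n,
    ((p j.val).1 < (p k.val).1 ↔ f j < f k) ∧
    ((p j.val).2 < (p k.val).2 ↔ σ (f j) < σ (f k))

def IsPinRepr {n : ℕ} (σ : Equiv.Perm (Fin n)) (p : ℕ → Point) : Prop :=
  ∃ f, IsPinReprWith σ p f

/-- `σ` is a pin-permutation. -/
def IsPinPerm {n : ℕ} (σ : Equiv.Perm (Fin n)) : Prop := ∃ p, IsPinRepr σ p

/-- Prepend the origin `p0` to the sequence of pins `p`. -/
def withOrigin (p0 : Point) (p : ℕ → Point) : ℕ → Point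
  | 0 => p0
  | i + 1 => p i

/-- The letter encoding the pin `q i` (where `q 0` is the origin). -/
def LetterIs (q : ℕ → Point) (i : ℕ) : Letter → Prop
  | .U => 2 ≤ i ∧ SepCond q i ∧ AboveAll q i
  | .D => 2 ≤ i ∧ SepCond q i ∧ BelowAll q i
  | .L => 2 ≤ i ∧ SepCond q i ∧ LeftAll q i
  | .R => 2 ≤ i ∧ SepCond q i ∧ RightAll q i
  | .n1 => IndepCond q i ∧ RightAll q i ∧ AboveAll q i
  | .n2 => IndepCond q i ∧ LeftAll q i ∧ AboveAll q i
  | .n3 => IndepCond q i ∧ LeftAll q i ∧ BelowAll q i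
  | .n4 => IndepCond q i ∧ RightAll q i ∧ BelowAll q i

/-- `w` is the pin word associated with the pin sequence `(q 0, q 1, …, q n)`,
whose origin is `q 0`. -/
def WordOf (q : ℕ → Point) (n : ℕ) (w : List Letter) : Prop :=
  w.length = n ∧ ∀ i < n, LetterIs q (i + 1) (w.getD i Letter.U)

/-- `P(σ)`: the set of pin words of the permutation `σ`. -/
def PinWords {n : ℕ} (σ : Equiv.Perm (Fin n)) : Set (List Letter) :=
  { w | ∃ (p : ℕ → Point) (p0 : Point), IsPinRepr σ p ∧
        IsPinSeq (withOrigin p0 p) (n + 1) ∧ WordOf (withOrigin p0 p) n w }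

/-- The set of pin words associated with the fixed pin representation `p`
over all admissible origins. -/
def WordsOfRepr (n : ℕ) (p : ℕ → Point) : Set (List Letter) :=
  { w | ∃ p0 : Point, IsPinSeq (withOrigin p0 p) (n + 1) ∧ WordOf (withOrigin p0 p) n w }

/-- `(p 0, …, p (n-1))` is a proper pin sequence: every pin from the third one on
satisfies the separation condition. -/
def IsProperSeq (p : ℕ → Point) (n : ℕ) : Prop :=
  IsPinSeq p n ∧ ∀ i, 2 ≤ i → i < n → SepCond p i

/-- `σ` is a proper pin-permutation. -/
def IsProperPinPerm {n : ℕ} (σ : Equiv.Perm (Fin n)) : Prop :=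
  ∃ p, IsPinRepr σ p ∧ IsProperSeq p n

/-- A strict pin word: a numeral followed only by directions. -/
def IsStrict (w : List Letter) : Prop :=
  ∃ c cs, w = c :: cs ∧ c.IsNumeral ∧ ∀ d ∈ cs, d.IsDirection

/-- A quasi-strict pin word: two numerals followed only by directions. -/
def IsQuasiStrict (w : List Letter) : Prop :=
  ∃ c₁ c₂ cs, w = c₁ :: c₂ :: cs ∧ c₁.IsNumeral ∧ c₂.IsNumeral ∧ ∀ d ∈ cs, d.IsDirection

/-- `w` is a pin word (of some permutation). -/
def IsPinWord (w : List Letter) : Prop :=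
  ∃ (n : ℕ) (σ : Equiv.Perm (Fin n)), w ∈ PinWords σ

/-- `SP`: the set of strict pin words. -/
def SPset : Set (List Letter) := { w | IsPinWord w ∧ IsStrict w }

def phi2 : Letter → Letter → List Letter
  | .n1, .R => [.R, .U, .R]
  | .n2, .R => [.L, .U, .R]
  | .n3, .R => [.L, .D, .R]
  | .n4, .R => [.R, .D, .R]
  | .n1, .L => [.R, .U, .L]
  | .n2, .L => [.L, .U, .L]
  | .n3, .L => [.L, .D, .L]
  | .n4, .L => [.R, .D, .L]
  | .n1, .U => [.U, .R, .U]
  | .n2, .U => [.U, .L, .U]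
  | .n3, .U => [.D, .L, .U]
  | .n4, .U => [.D, .R, .U]
  | .n1, .D => [.U, .R, .D]
  | .n2, .D => [.U, .L, .D]
  | .n3, .D => [.D, .L, .D]
  | .n4, .D => [.D, .R, .D]
  | _, _ => []

def phi1 : Letter → Set (List Letter)
  | .n1 => {[.U, .R], [.R, .U]}
  | .n2 => {[.U, .L], [.L, .U]}
  | .n3 => {[.D, .L], [.L, .D]}
  | .n4 => {[.R, .D], [.D, .R]}
  | _ => ∅

def phiInv2 : Letter → Letter → Letter
  | .U, .R => .n1
  | .R, .U => .n1
  | .U, .L => .n2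
  | .L, .U => .n2
  | .D, .L => .n3
  | .L, .D => .n3
  | .R, .D => .n4
  | .D, .R => .n4
  | _, _ => .n1

/-- `φ(u)`, as a set of words: a two-element set when `u` is a single numeral,
a singleton `{φ(u)}` when `u` is a strict pin word of length at least 2, and
the identity (as a singleton) on words of `M`. -/
def phiSet : List Letter → Set (List Letter)
  | [] => {[]}
  | [c] => if c.isNum then phi1 c else {[c]}
  | c :: d :: rest => if c.isNum then {phi2 c d ++ rest} else {c :: d :: rest}

/-- The quadrant numeral `q(c,d)`. -/
def quadNum (c d : Letter) : Letter :=
  if c.isNum then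
    match phi2 c d with
    | [_, b, e] => phiInv2 b e
    | _ => Letter.n1
  else phiInv2 c d

/-- `us` is the strong numeral-led factor decomposition of `u`. -/
def IsSNLD (u : List Letter) (us : List (List Letter)) : Prop :=
  us.flatten = u ∧ ∀ v ∈ us, IsStrict v

def interleave : List (List Letter) → List (List Letter) → List Letter
  | [], _ => []
  | v :: vs, [] => v ++ interleave vs []
  | v :: vs, w :: ws => v ++ w ++ interleave vs ws

/-- The condition on the pieces `v^(i)`, `w^(i)`, `u^(i)` in the definition of `≼`. -/
def PieceCond (v wi ui : List Letter) : Prop :=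
  (∃ c cs, wi = c :: cs ∧ c.IsNumeral ∧ wi = ui) ∨
  (∃ d ds c, wi = d :: ds ∧ d.IsDirection ∧ v ≠ [] ∧ v.getLast? = some c ∧
    ui = quadNum c d :: ds)

/-- The order `u ≼ w` on pin words. -/
def PinOrder (u w : List Letter) : Prop :=
  ∃ us, IsSNLD u us ∧
    ∃ vs ws : List (List Letter), ws.length = us.length ∧ vs.length = us.length + 1 ∧
      w = interleave vs ws ∧
      ∀ i < us.length, PieceCond (vs.getD i []) (ws.getD i []) (us.getD i [])

def IsVert (c : Letter) : Prop := c = Letter.U ∨ c = Letter.D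
def IsHoriz (c : Letter) : Prop := c = Letter.L ∨ c = Letter.R

/-- `M`: words over `{U,D,L,R}` of length at least 2 with no factor in
`{UU,UD,DU,DD,LL,LR,RL,RR}`. -/
def MSet : Set (List Letter) :=
  { w | 2 ≤ w.length ∧ (∀ c ∈ w, c.IsDirection) ∧
        ∀ a c : Letter, [a, c] <:+: w →
          ¬(IsVert a ∧ IsVert c) ∧ ¬(IsHoriz a ∧ IsHoriz c) }

/-- `A*`: all words over the direction alphabet `A = {U,D,L,R}`. -/
def Astar : Set (List Letter) := { w | ∀ c ∈ w, c.IsDirection }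

/-- Concatenation of languages. -/
def LMul (X Y : Set (List Letter)) : Set (List Letter) :=
  { w | ∃ x ∈ X, ∃ y ∈ Y, w = x ++ y }

/-- The language `L(u) = A* φ(u^(1)) A* φ(u^(2)) … A* φ(u^(j)) A*`. -/
def LangOf (u : List Letter) : Set (List Letter) :=
  { m | ∃ us, IsSNLD u us ∧
      ∃ vs ws : List (List Letter), ws.length = us.length ∧ vs.length = us.length + 1 ∧
        m = interleave vs ws ∧ (∀ v ∈ vs, v ∈ Astar) ∧
        ∀ i < us.length, ws.getD i [] ∈ phiSet (us.getD i []) }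

/-- The language `L_π = ⋃_{u ∈ P(π)} L(u)`. -/
def Lperm {n : ℕ} (π : Equiv.Perm (Fin n)) : Set (List Letter) :=
  { m | ∃ u ∈ PinWords π, m ∈ LangOf u }

/-- `π ≤ σ`: the permutation `π` is a pattern of the permutation `σ`. -/
def IsPattern {k n : ℕ} (π : Equiv.Perm (Fin k)) (σ : Equiv.Perm (Fin n)) : Prop :=
  ∃ g : Fin k → Fin n, StrictMono g ∧ ∀ a b : Fin k, (π a < π b ↔ σ (g a) < σ (g b))

/-- `q i` lies in the quadrant (given by a numeral letter) of the bounding box of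
`{q j | j < m}`. -/
def InQuadOf (q : ℕ → Point) (i m : ℕ) : Letter → Prop
  | .n1 => (∀ j < m, (q j).1 < (q i).1) ∧ (∀ j < m, (q j).2 < (q i).2)
  | .n2 => (∀ j < m, (q i).1 < (q j).1) ∧ (∀ j < m, (q j).2 < (q i).2)
  | .n3 => (∀ j < m, (q i).1 < (q j).1) ∧ (∀ j < m, (q i).2 < (q j).2)
  | .n4 => (∀ j < m, (q j).1 < (q i).1) ∧ (∀ j < m, (q i).2 < (q j).2)
  | _ => False


/-- `σ = ⊕[π_0, …, π_(r-1)]` where the `k`-th child occupies positions and values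
`[b k, b (k+1))`. -/
def SumDecomp {n : ℕ} (σ : Equiv.Perm (Fin n)) (r : ℕ) (b : ℕ → ℕ) : Prop :=
  b 0 = 0 ∧ b r = n ∧ (∀ k < r, b k < b (k + 1)) ∧
  ∀ k < r, ∀ i : Fin n, b k ≤ i.val → i.val < b (k + 1) →
    b k ≤ (σ i).val ∧ (σ i).val < b (k + 1)

/-- The child of `σ` occupying positions `[lo, hi)` is ⊕-indecomposable. -/
def ChildIndecomp {n : ℕ} (σ : Equiv.Perm (Fin n)) (lo hi : ℕ) : Prop :=
  ¬ ∃ m, lo < m ∧ m < hi ∧ ∀ i : Fin n, lo ≤ i.val → i.val < m → (σ i).val < m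

/-- The pin read at time `a` belongs to the `k`-th child (`f` sends times to positions). -/
def PinInChild {n : ℕ} (b : ℕ → ℕ) (f : Fin n ≃ Fin n) (a : Fin n) (k : ℕ) : Prop :=
  b k ≤ (f a).val ∧ (f a).val < b (k + 1)

/-- The set of (times of) pins belonging to the `k`-th child. -/
def ChildPins {n : ℕ} (b : ℕ → ℕ) (f : Fin n ≃ Fin n) (k : ℕ) : Set (Fin n) :=
  { a | PinInChild b f a k }

/-- The starting times of the maximal runs of consecutive reading times in `S`. -/
def PieceStarts {n : ℕ} (S : Set (Fin n)) : Set (Fin n) :=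
  { a | a ∈ S ∧ ∀ c : Fin n, c.val + 1 = a.val → c ∉ S }

/-- `S` is read in exactly `k` pieces. -/
def ReadInPieces {n : ℕ} (S : Set (Fin n)) (k : ℕ) : Prop := (PieceStarts S).ncard = k

/-- The pins of `D` are all read before the pins of `C`. -/
def ReadBefore {n : ℕ} (D C : Set (Fin n)) : Prop := ∀ a ∈ D, ∀ c ∈ C, a < c

/-- The infinite oscillating sequence `ω = 3 1 5 2 7 4 9 6 …` (1-indexed). -/
def omegaSeq (i : ℕ) : ℕ := if i = 2 then 1 else if i % 2 = 1 then i + 2 else i - 2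

/-- `π` is a pattern of some prefix of the infinite oscillating sequence `ω`. -/
def IsOmegaPattern {k : ℕ} (π : Equiv.Perm (Fin k)) : Prop :=
  ∃ g : Fin k → ℕ, StrictMono g ∧ (∀ a, 1 ≤ g a) ∧
    ∀ a b : Fin k, (π a < π b ↔ omegaSeq (g a) < omegaSeq (g b))

/-- The interval of positions `[lo, lo+len)` is a block of `σ`. -/
def IsBlockOf {n : ℕ} (σ : Equiv.Perm (Fin n)) (lo len : ℕ) : Prop :=
  lo + len ≤ n ∧ ∃ vlo, ∀ i : Fin n,
    (lo ≤ i.val ∧ i.val < lo + len) ↔ (vlo ≤ (σ i).val ∧ (σ i).val < vlo + len)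

/-- `σ` is a simple permutation. -/
def IsSimplePerm {n : ℕ} (σ : Equiv.Perm (Fin n)) : Prop :=
  4 ≤ n ∧ ∀ lo len, IsBlockOf σ lo len → len ≤ 1 ∨ len = n

/-- `π` is the permutation whose one-line notation is the list `l`. -/
def PermMatches {k : ℕ} (π : Equiv.Perm (Fin k)) (l : List ℕ) : Prop :=
  l.length = k ∧ ∀ i : Fin k, (π i).val + 1 = l.getD i.val 0

/-- `ξ` is an increasing oscillation. -/
def IsIncrOsc {k : ℕ} (ξ : Equiv.Perm (Fin k)) : Prop :=
  PermMatches ξ [1] ∨ PermMatches ξ [2, 1] ∨ PermMatches ξ [2, 3, 1] ∨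
  PermMatches ξ [3, 1, 2] ∨ (4 ≤ k ∧ IsSimplePerm ξ ∧ IsOmegaPattern ξ)

/-- The child of `σ` occupying positions `[lo, hi)` is order-isomorphic to `ξ`. -/
def ChildIsPerm {n m : ℕ} (σ : Equiv.Perm (Fin n)) (lo hi : ℕ)
    (ξ : Equiv.Perm (Fin m)) : Prop :=
  lo + m = hi ∧ ∀ (a c : Fin m) (ia ic : Fin n), ia.val = lo + a.val → ic.val = lo + c.val →
    ((σ ia).val < (σ ic).val ↔ (ξ a).val < (ξ c).val)

/-- The child of `σ` occupying positions `[lo, hi)` is an increasing oscillation. -/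
def ChildIsIncrOsc {n : ℕ} (σ : Equiv.Perm (Fin n)) (lo hi : ℕ) : Prop :=
  ∃ (m : ℕ) (ξ : Equiv.Perm (Fin m)), IsIncrOsc ξ ∧ ChildIsPerm σ lo hi ξ

/-- `τ = ⊕[ξ, η]`. -/
def IsDSum2 {m k l : ℕ} (τ : Equiv.Perm (Fin m)) (ξ : Equiv.Perm (Fin k))
    (η : Equiv.Perm (Fin l)) : Prop :=
  m = k + l ∧ (∀ i : Fin m, i.val < k → (τ i).val < k) ∧
    ChildIsPerm τ 0 k ξ ∧ ChildIsPerm τ k m η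

/-- The origin `p0` lies in quadrant 1 of the bounding box of `{p j | j < n}`. -/
def OriginQ1 (p0 : Point) (p : ℕ → Point) (n : ℕ) : Prop :=
  ∀ j < n, (p j).1 < p0.1 ∧ (p j).2 < p0.2

/-- The origin `p0` lies in quadrant 3 of the bounding box of `{p j | j < n}`. -/
def OriginQ3 (p0 : Point) (p : ℕ → Point) (n : ℕ) : Prop :=
  ∀ j < n, p0.1 < (p j).1 ∧ p0.2 < (p j).2

/-- `P^(1)(ξ)`: pin words of `ξ` whose origin lies in quadrant 1 w.r.t. the points of `ξ`. -/
def PinWordsQ1 {n : ℕ} (ξ : Equiv.Perm (Fin n)) : Set (List Letter) :=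
  { w | ∃ (p : ℕ → Point) (p0 : Point), IsPinRepr ξ p ∧
        IsPinSeq (withOrigin p0 p) (n + 1) ∧ WordOf (withOrigin p0 p) n w ∧ OriginQ1 p0 p n }

/-- `P^(3)(ξ)`: pin words of `ξ` whose origin lies in quadrant 3 w.r.t. the points of `ξ`. -/
def PinWordsQ3 {n : ℕ} (ξ : Equiv.Perm (Fin n)) : Set (List Letter) :=
  { w | ∃ (p : ℕ → Point) (p0 : Point), IsPinRepr ξ p ∧
        IsPinSeq (withOrigin p0 p) (n + 1) ∧ WordOf (withOrigin p0 p) n w ∧ OriginQ3 p0 p n }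

/-- The shuffle product of two sequences of sets of words. -/
def ShuffleSeq : List (Set (List Letter)) → List (Set (List Letter)) → Set (List Letter)
  | [], [] => {[]}
  | X :: As, [] => { w | ∃ x ∈ X, ∃ t ∈ ShuffleSeq As [], w = x ++ t }
  | [], Y :: Bs => { w | ∃ y ∈ Y, ∃ t ∈ ShuffleSeq ([] : List (Set (List Letter))) Bs, w = y ++ t }
  | X :: As, Y :: Bs =>
      { w | (∃ x ∈ X, ∃ t ∈ ShuffleSeq As (Y :: Bs), w = x ++ t) ∨
            (∃ y ∈ Y, ∃ t ∈ ShuffleSeq (X :: As) Bs, w = y ++ t) }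
  termination_by A B => A.length + B.length

/-- The `p`-fold repetition `x^p` of the word `x`. -/
def repW (p : ℕ) (x : List Letter) : List Letter := (List.replicate p x).flatten

/-- The points of `ξ` at positions `i` and `j` form an active knight of `ξ`:
they occur (in some order) as the first two pins of some pin representation of `ξ`. -/
def ActiveKnight {k : ℕ} (ξ : Equiv.Perm (Fin k)) (i j : Fin k) : Prop :=
  ∃ (p : ℕ → Point) (f : Fin k ≃ Fin k) (h2 : 2 ≤ k),
    IsPinReprWith ξ p f ∧
    ((f ⟨0, by omega⟩ = i ∧ f ⟨1, by omega⟩ = j) ∨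
     (f ⟨0, by omega⟩ = j ∧ f ⟨1, by omega⟩ = i))

/-- The points at positions `i`, `j` are in horizontal knight position. -/
def KnightH {k : ℕ} (ξ : Equiv.Perm (Fin k)) (i j : Fin k) : Prop :=
  (i.val + 2 = j.val ∨ j.val + 2 = i.val) ∧
  ((ξ i).val + 1 = (ξ j).val ∨ (ξ j).val + 1 = (ξ i).val)

/-- The points at positions `i`, `j` are in vertical knight position. -/
def KnightV {k : ℕ} (ξ : Equiv.Perm (Fin k)) (i j : Fin k) : Prop :=
  (i.val + 1 = j.val ∨ j.val + 1 = i.val) ∧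
  ((ξ i).val + 2 = (ξ j).val ∨ (ξ j).val + 2 = (ξ i).val)

inductive KType : Type
  | H | V

def KnightOfType {k : ℕ} (t : KType) (ξ : Equiv.Perm (Fin k)) (i j : Fin k) : Prop :=
  match t with
  | .H => KnightH ξ i j
  | .V => KnightV ξ i j

/-- The increasing oscillation `ξ` has type `(x, y)`: its lower-left active knight
(the one containing the leftmost point) has knight-position type `x` and its
upper-right active knight (the one containing the rightmost point) has type `y`. -/
def HasOscType {k : ℕ} (ξ : Equiv.Perm (Fin k)) (x y : KType) : Prop :=
  ∃ i j i' j' : Fin k, ActiveKnight ξ i j ∧ ActiveKnight ξ i' j' ∧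
    i.val = 0 ∧ j'.val + 1 = k ∧ KnightOfType x ξ i j ∧ KnightOfType y ξ i' j'

/-- The permutation 21. -/
def perm21 : Equiv.Perm (Fin 2) := Equiv.swap 0 1

/-- The permutation 12. -/
def perm12 : Equiv.Perm (Fin 2) := Equiv.refl (Fin 2)

def EndsH (w : List Letter) : Prop := w.getLast? = some Letter.R ∨ w.getLast? = some Letter.L
def EndsV (w : List Letter) : Prop := w.getLast? = some Letter.U ∨ w.getLast? = some Letter.D

/-- `Q⁻`: quasi-strict pin words of 21. -/
def Qminus : Set (List Letter) := { w | w ∈ PinWords perm21 ∧ IsQuasiStrict w }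
/-- `S⁻_H`: strict pin words of 21 ending with R or L. -/
def SminusH : Set (List Letter) := { w | w ∈ PinWords perm21 ∧ IsStrict w ∧ EndsH w }
/-- `S⁻_V`: strict pin words of 21 ending with U or D. -/
def SminusV : Set (List Letter) := { w | w ∈ PinWords perm21 ∧ IsStrict w ∧ EndsV w }
/-- `Q⁺`: quasi-strict pin words of 12. -/
def Qplus : Set (List Letter) := { w | w ∈ PinWords perm12 ∧ IsQuasiStrict w }
/-- `S⁺_H`: strict pin words of 12 ending with R or L. -/
def SplusH : Set (List Letter) := { w | w ∈ PinWords perm12 ∧ IsStrict w ∧ EndsH w }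
/-- `S⁺_V`: strict pin words of 12 ending with U or D. -/
def SplusV : Set (List Letter) := { w | w ∈ PinWords perm12 ∧ IsStrict w ∧ EndsV w }

/-- `P^mix(ξ_i, ξ_j)` for `τ = ⊕[ξ_i, ξ_j]` with `|ξ_i| = s1`: pin words associated
with a pin representation of `τ` reading one of the two children in two pieces. -/
def Pmix {m : ℕ} (τ : Equiv.Perm (Fin m)) (s1 : ℕ) : Set (List Letter) :=
  { w | ∃ (p : ℕ → Point) (p0 : Point) (f : Fin m ≃ Fin m),
      IsPinReprWith τ p f ∧ IsPinSeq (withOrigin p0 p) (m + 1) ∧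
      WordOf (withOrigin p0 p) m w ∧
      (ReadInPieces { a : Fin m | (f a).val < s1 } 2 ∨
       ReadInPieces { a : Fin m | s1 ≤ (f a).val } 2) }

/-- The set of words `{13, 23, 33, 43, 1D, 4D}`. -/
def W13D : Set (List Letter) :=
  {[Letter.n1, Letter.n3], [Letter.n2, Letter.n3], [Letter.n3, Letter.n3],
   [Letter.n4, Letter.n3], [Letter.n1, Letter.D], [Letter.n4, Letter.D]}

/-- The set of words `{13, 23, 33, 43, 1L, 2L}`. -/
def W13L : Set (List Letter) :=
  {[Letter.n1, Letter.n3], [Letter.n2, Letter.n3], [Letter.n3, Letter.n3],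
   [Letter.n4, Letter.n3], [Letter.n1, Letter.L], [Letter.n2, Letter.L]}

/-- `M_2 = {UR, UL, DR, DL, RU, RD, LU, LD}`. -/
def M2Set : Set (List Letter) :=
  {[Letter.U, Letter.R], [Letter.U, Letter.L], [Letter.D, Letter.R], [Letter.D, Letter.L],
   [Letter.R, Letter.U], [Letter.R, Letter.D], [Letter.L, Letter.U], [Letter.L, Letter.D]}

/-- `E^s_π`: the words `φ(u)` for `u ∈ P(π)` strict. -/
def EsSet {n : ℕ} (π : Equiv.Perm (Fin n)) : Set (List Letter) :=
  { v | ∃ u ∈ PinWords π, IsStrict u ∧ v ∈ phiSet u }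

/-- `E^qs_π`: the words `φ(u^(2))` for `u = u^(1)u^(2) ∈ P(π)` quasi-strict. -/
def EqsSet {n : ℕ} (π : Equiv.Perm (Fin n)) : Set (List Letter) :=
  { v | ∃ u ∈ PinWords π, IsQuasiStrict u ∧ ∃ u1 u2, IsSNLD u [u1, u2] ∧ v ∈ phiSet u2 }



/-! Children of a direct sum lie south-west/north-east of each other, so every pin outside a
child `S` lies south-west or north-east of all of `S`. Suppose a child not containing the first
pin is interrupted by a pin `t` read between two of its pins, say with `t` south-west of `S`.
Every pin `u` of `S` read after `t` lies outside the bounding box of the earlier pins, so the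
first pin is south-west of `u` too; the separation or independence condition then forces every
pin read before the predecessor of `u` to be south-west of `u`. Hence the pins of `S` read before
`t` lie south-west of those read after `t`, which splits the child as a direct sum. -/

def SouthWest (a b : Point) : Prop := a.1 < b.1 ∧ a.2 < b.2

local infix:50 " ≺ " => SouthWest

theorem neg_southWest_neg {a b : Point} : -a ≺ -b ↔ b ≺ a := by
  simp only [SouthWest, Prod.fst_neg, Prod.snd_neg, neg_lt_neg_iff]

theorem IsPinSeq.neg {q : ℕ → Point} {m : ℕ} (hq : IsPinSeq q m) :
    IsPinSeq (fun i => -q i) m := by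
  obtain ⟨hdist, hpin⟩ := hq
  refine ⟨fun i hi j hj hij => by simpa using hdist i hi j hj hij, fun i hi1 him => ?_⟩
  obtain ⟨hbox, hcond⟩ := hpin i hi1 him
  simp only [OutsideBox, RightAll, LeftAll, AboveAll, BelowAll, SepCond, VLineSep, HLineSep,
    IndepCond, Prod.fst_neg, Prod.snd_neg, neg_lt_neg_iff] at hbox hcond ⊢
  exact ⟨by tauto, by rw [and_comm (a := ∃ j < i, (q i).1 < (q j).1),
    and_comm (a := ∃ j < i, (q i).2 < (q j).2)]; tauto⟩

theorem OutsideBox.not_between {q : ℕ → Point} {u i j : ℕ} (hbox : OutsideBox q u)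
    (hi : i < u) (hj : j < u) (hiu : q i ≺ q u) (huj : q u ≺ q j) : False := by
  rcases hbox with hR | hL | hA | hB
  · exact (hR j hj).asymm huj.1
  · exact (hL i hi).asymm hiu.1
  · exact (hA j hj).asymm huj.2
  · exact (hB i hi).asymm hiu.2

theorem IsPinSeq.southWest_of_origin_southWest {q : ℕ → Point} {m u : ℕ} (hq : IsPinSeq q m)
    (hu : 2 ≤ u) (hum : u < m) (h0 : q 0 ≺ q u) {j : ℕ} (hj : j < u - 1) : q j ≺ q u := by
  obtain ⟨hbox, hcond⟩ := hq.2 u (by omega) hum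
  have hbox' : RightAll q u ∨ AboveAll q u := by
    rcases hbox with hR | hL | hA | hB
    · exact Or.inl hR
    · exact ((hL 0 (by omega)).asymm h0.1).elim
    · exact Or.inr hA
    · exact ((hB 0 (by omega)).asymm h0.2).elim
  rcases hcond with ((⟨-, hright⟩ | ⟨hleft, hxs⟩) | (⟨-, habove⟩ | ⟨hbelow, hys⟩)) | ⟨hx, hy⟩
  · exact ((hright 0 (by omega)).asymm h0.1).elim
  · refine ⟨hxs j hj, hbox'.elim (fun hR => ((hR _ (by omega)).asymm hleft).elim)
      (· j (by omega))⟩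
  · exact ((habove 0 (by omega)).asymm h0.2).elim
  · refine ⟨hbox'.elim (· j (by omega)) (fun hA => ((hA _ (by omega)).asymm hbelow).elim),
      hys j hj⟩
  · -- independence: a pin on the far side of `q u` would split `q 0, …, q (u-1)` with `q 0`
    have hne := hq.1 j (by omega) u hum (by omega)
    exact ⟨hne.1.lt_or_gt.resolve_right fun h => hx ⟨⟨0, by omega, h0.1⟩, j, by omega, h⟩,
      hne.2.lt_or_gt.resolve_right fun h => hy ⟨⟨0, by omega, h0.2⟩, j, by omega, h⟩⟩

theorem IsPinSeq.northEast_of_origin_northEast {q : ℕ → Point} {m u : ℕ} (hq : IsPinSeq q m)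
    (hu : 2 ≤ u) (hum : u < m) (h0 : q u ≺ q 0) {j : ℕ} (hj : j < u - 1) : q u ≺ q j :=
  neg_southWest_neg.1 <| hq.neg.southWest_of_origin_southWest hu hum (neg_southWest_neg.2 h0) hj

theorem IsPinSeq.southWest_or_northEast_across {n : ℕ} {p : ℕ → Point} (hp : IsPinSeq p n)
    {S : Set (Fin n)} (hside : ∀ w ∉ S, (∀ a ∈ S, p w ≺ p a) ∨ (∀ a ∈ S, p a ≺ p w))
    (hn : 0 < n) (h0 : ⟨0, hn⟩ ∉ S) {t : Fin n} (ht : t ∉ S) :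
    (∀ q ∈ S, ∀ u ∈ S, q < t → t < u → p q ≺ p u) ∨
      (∀ q ∈ S, ∀ u ∈ S, q < t → t < u → p u ≺ p q) := by
  have hbox : ∀ u : Fin n, t < u → OutsideBox p u :=
    fun u htu => (hp.2 u (by omega) u.isLt).1
  rcases hside t ht with htS | hSt
  · refine Or.inl fun q _ u hu hqt htu => hp.southWest_of_origin_southWest (by omega) u.isLt
      ?_ (by omega)
    refine (hside _ h0).elim (· u hu) fun h0S => ?_
    exact ((hbox u htu).not_between (i := t) (j := 0) htu (by omega) (htS u hu) (h0S u hu)).elim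
  · refine Or.inr fun q _ u hu hqt htu => hp.northEast_of_origin_northEast (by omega) u.isLt
      ?_ (by omega)
    refine (hside _ h0).elim (fun h0S => ?_) (· u hu)
    exact ((hbox u htu).not_between (i := 0) (j := t) (by omega) htu (h0S u hu) (hSt u hu)).elim

/-- `σ = ⊕[σ₁, σ₂]` with `|σ₁| = N`, empty summands allowed. -/
def SplitsAt {n : ℕ} (σ : Equiv.Perm (Fin n)) (N : ℕ) : Prop :=
  ∀ i : Fin n, (σ i).val < N ↔ i.val < N

theorem splitsAt_of_forall_lt {n N : ℕ} {σ : Equiv.Perm (Fin n)}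
    (h : ∀ i : Fin n, i.val < N → (σ i).val < N) : SplitsAt σ N := by
  intro i
  refine ⟨fun hi => ?_, h i⟩
  have hbij := ((Set.toFinite {j : Fin n | j.val < N}).injOn_iff_bijOn_of_mapsTo
    (f := σ) h).1 σ.injective.injOn
  obtain ⟨j, hj, hji⟩ := hbij.surjOn hi
  exact σ.injective hji ▸ hj

theorem SplitsAt.lt_and_lt {n N : ℕ} {σ : Equiv.Perm (Fin n)} (h : SplitsAt σ N) {i j : Fin n}
    (hi : i.val < N) (hj : N ≤ j.val) : i < j ∧ σ i < σ j := by
  have hσi := (h i).2 hi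
  have hσj := mt (h j).1 (by omega)
  exact ⟨Fin.lt_def.2 (by omega), Fin.lt_def.2 (by omega)⟩

section SumDecomp

variable {n r : ℕ} {σ : Equiv.Perm (Fin n)} {b : ℕ → ℕ}

theorem SumDecomp.le_of_le (h : SumDecomp σ r b) {i j : ℕ} (hij : i ≤ j) (hj : j ≤ r) :
    b i ≤ b j := by
  induction j, hij using Nat.le_induction with
  | base => exact le_rfl
  | succ j _ ih => exact (ih (by omega)).trans (h.2.2.1 j (by omega)).le

theorem SumDecomp.splitsAt (h : SumDecomp σ r b) {k : ℕ} (hk : k ≤ r) : SplitsAt σ (b k) := by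
  apply splitsAt_of_forall_lt
  induction k with
  | zero => intro i hi; rw [h.1] at hi; omega
  | succ k ih =>
    intro i hi
    by_cases hik : i.val < b k
    · exact (ih (by omega) i hik).trans (h.2.2.1 k (by omega))
    · exact (h.2.2.2 k (by omega) i (by omega) hi).2

theorem SumDecomp.eq_of_mem_Ico (h : SumDecomp σ r b) {k l x : ℕ} (hk : k < r) (hl : l < r)
    (hxk : x ∈ Set.Ico (b k) (b (k + 1))) (hxl : x ∈ Set.Ico (b l) (b (l + 1))) : k = l := by
  rcases lt_trichotomy k l with hkl | rfl | hlk
  · have := h.le_of_le (show k + 1 ≤ l by omega) hl.le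
    exact absurd hxl.1 (by have := hxk.2; omega)
  · rfl
  · have := h.le_of_le (show l + 1 ≤ k by omega) hk.le
    exact absurd hxk.1 (by have := hxl.2; omega)

end SumDecomp

theorem eq_Ico_of_union_eq_Ico {X Y : Finset ℕ} {lo hi : ℕ} (hXY : X ∪ Y = Finset.Ico lo hi)
    (hlt : ∀ x ∈ X, ∀ y ∈ Y, x < y) : X = Finset.Ico lo (lo + X.card) := by
  have hsub : X ⊆ Finset.Ico lo (lo + X.card) := by
    intro x hx
    have hxI : x ∈ Finset.Ico lo hi := hXY ▸ Finset.mem_union_left Y hx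
    rw [Finset.mem_Ico] at hxI
    have hseg : Finset.Ico lo (x + 1) ⊆ X := by
      intro z hz
      rw [Finset.mem_Ico] at hz
      have hzI : z ∈ X ∪ Y := hXY ▸ Finset.mem_Ico.2 ⟨hz.1, by omega⟩
      exact (Finset.mem_union.1 hzI).resolve_right fun hzY => by
        have := hlt x hx z hzY; omega
    have := Finset.card_le_card hseg
    rw [Nat.card_Ico] at this
    exact Finset.mem_Ico.2 ⟨hxI.1, by omega⟩
  exact Finset.eq_of_subset_of_card_le hsub (by rw [Nat.card_Ico]; omega)

theorem image_val_filter_mem_Ico {n lo hi : ℕ} (hhi : hi ≤ n) (g : Fin n ≃ Fin n)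
    (hg : ∀ i, (g i).val ∈ Set.Ico lo hi ↔ i.val ∈ Set.Ico lo hi) :
    (Finset.univ.filter fun i : Fin n => i.val ∈ Set.Ico lo hi).image (g · |>.val) =
      Finset.Ico lo hi := by
  ext x
  simp only [Finset.mem_image, Finset.mem_filter, Finset.mem_univ, true_and, Finset.mem_Ico]
  refine ⟨fun ⟨i, hi, hix⟩ => hix ▸ (hg i).2 hi, fun hx => ⟨g.symm ⟨x, by omega⟩, ?_, by simp⟩⟩
  simpa using (hg (g.symm ⟨x, by omega⟩)).1 (by simpa using hx)

theorem not_childIndecomp_of_southWest_split {n lo hi : ℕ} {σ : Equiv.Perm (Fin n)}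
    (hhi : hi ≤ n) (hslo : SplitsAt σ lo) (hshi : SplitsAt σ hi) (E : Fin n → Prop)
    (hE : ∃ i : Fin n, i.val ∈ Set.Ico lo hi ∧ E i)
    (hnE : ∃ j : Fin n, j.val ∈ Set.Ico lo hi ∧ ¬E j)
    (hlt : ∀ i j : Fin n, i.val ∈ Set.Ico lo hi → j.val ∈ Set.Ico lo hi → E i → ¬E j →
      i < j ∧ σ i < σ j) :
    ¬ChildIndecomp σ lo hi := by
  classical
  set C := Finset.univ.filter fun i : Fin n => i.val ∈ Set.Ico lo hi
  set P := C.filter E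
  set Q := C.filter (¬E ·)
  have hPQ : P ∪ Q = C := Finset.filter_union_filter_not_eq _ _
  have hmemC : ∀ i, i ∈ C ↔ i.val ∈ Set.Ico lo hi := by simp [C]
  have hC : C.image (·.val) = Finset.Ico lo hi :=
    image_val_filter_mem_Ico hhi (Equiv.refl _) fun _ => .rfl
  have hσC : C.image (σ · |>.val) = Finset.Ico lo hi := by
    refine image_val_filter_mem_Ico hhi σ fun i => ?_
    have := hslo i; have := hshi i
    simp only [Set.mem_Ico]; omega
  have hPQlt : ∀ i ∈ P, ∀ j ∈ Q, i < j ∧ σ i < σ j := by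
    simp only [P, Q, Finset.mem_filter, hmemC]
    exact fun i hi j hj => hlt i j hi.1 hj.1 hi.2 hj.2
  have hpos : P.image (·.val) = Finset.Ico lo (lo + P.card) := by
    have := eq_Ico_of_union_eq_Ico (Y := Q.image (·.val))
      (by rw [← Finset.image_union, hPQ, hC]) (by simpa using fun i hi j hj => (hPQlt i hi j hj).1)
    rwa [Finset.card_image_of_injective _ Fin.val_injective] at this
  have hval : P.image (σ · |>.val) = Finset.Ico lo (lo + P.card) := by
    have := eq_Ico_of_union_eq_Ico (Y := Q.image (σ · |>.val))
      (by rw [← Finset.image_union, hPQ, hσC]) (by simpa using fun i hi j hj => (hPQlt i hi j hj).2)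
    rwa [Finset.card_image_of_injective _ fun _ _ h => σ.injective (Fin.val_injective h)] at this
  obtain ⟨i, hiC, hEi⟩ := hE
  obtain ⟨j, hjC, hEj⟩ := hnE
  have hiP : i ∈ P := by simp [P, hmemC, hiC, hEi]
  have hjP : j.val ∉ Finset.Ico lo (lo + P.card) := by
    rw [← hpos]
    simp only [Finset.mem_image, Fin.val_inj, exists_eq_right]
    simp [P, hEj]
  refine fun hind => hind ⟨lo + P.card, ?_, ?_, fun k hk1 hk2 => ?_⟩
  · have := Finset.card_pos.2 ⟨i, hiP⟩; omega
  · simp only [Finset.mem_Ico, not_and, not_lt] at hjP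
    exact (hjP hjC.1).trans_lt hjC.2
  · have hk : k.val ∈ P.image (·.val) := hpos ▸ Finset.mem_Ico.2 ⟨hk1, hk2⟩
    simp only [Finset.mem_image, Fin.val_inj, exists_eq_right] at hk
    exact (Finset.mem_Ico.1 (hval ▸ Finset.mem_image_of_mem _ hk)).2

theorem IsPinReprWith.southWest_iff {n : ℕ} {σ : Equiv.Perm (Fin n)} {p : ℕ → Point}
    {f : Fin n ≃ Fin n} (hp : IsPinReprWith σ p f) (a c : Fin n) :
    p a ≺ p c ↔ f a < f c ∧ σ (f a) < σ (f c) :=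
  and_congr (hp.2 a c).1 (hp.2 a c).2

theorem IsPinReprWith.not_childIndecomp {n lo hi : ℕ} {σ : Equiv.Perm (Fin n)}
    {p : ℕ → Point} {f : Fin n ≃ Fin n} (hp : IsPinReprWith σ p f)
    (hhi : hi ≤ n) (hslo : SplitsAt σ lo) (hshi : SplitsAt σ hi) (T : Fin n → Prop)
    (hT : ∃ a : Fin n, (f a).val ∈ Set.Ico lo hi ∧ T a)
    (hnT : ∃ c : Fin n, (f c).val ∈ Set.Ico lo hi ∧ ¬T c)
    (hsw : ∀ a c : Fin n, (f a).val ∈ Set.Ico lo hi → (f c).val ∈ Set.Ico lo hi → T a → ¬T c →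
      p a ≺ p c) :
    ¬ChildIndecomp σ lo hi := by
  obtain ⟨a, ha, hTa⟩ := hT
  obtain ⟨c, hc, hTc⟩ := hnT
  refine not_childIndecomp_of_southWest_split hhi hslo hshi (T <| f.symm ·)
    ⟨f a, ha, by simpa using hTa⟩ ⟨f c, hc, by simpa using hTc⟩ fun i j hi hj hTi hTj => ?_
  simpa using (hp.southWest_iff _ _).1 (hsw _ _ (by simpa using hi) (by simpa using hj) hTi hTj)

theorem readInPieces_one_of_ordConnected {n : ℕ} {S : Set (Fin n)} (hne : S.Nonempty)
    (hS : S.OrdConnected) : ReadInPieces S 1 := by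
  obtain ⟨a₀, ha₀, hmin⟩ := Set.exists_min_image S id S.toFinite hne
  suffices PieceStarts S = {a₀} by rw [ReadInPieces, this, Set.ncard_singleton]
  ext a
  refine ⟨fun ⟨ha, hstart⟩ => ?_, fun h => h ▸ ⟨ha₀, fun c hc hcS => ?_⟩⟩
  · rw [Set.mem_singleton_iff]
    by_contra hne
    have ha₀a : a₀.val < a.val := Fin.lt_def.1 (lt_of_le_of_ne (hmin a ha) (Ne.symm hne))
    have hc : (⟨a.val - 1, by omega⟩ : Fin n) ∈ S :=
      hS.out ha₀ ha ⟨Fin.le_def.2 (by dsimp only; omega), Fin.le_def.2 (by dsimp only; omega)⟩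
    exact hstart _ (by dsimp only; omega) hc
  · have := Fin.le_def.1 (show a₀ ≤ c from hmin c hcS)
    omega

theorem statement_11_general {n r : ℕ} (σ : Equiv.Perm (Fin n)) (b : ℕ → ℕ)
    (hdec : SumDecomp σ r b)
    (hind : ∀ k < r, ChildIndecomp σ (b k) (b (k + 1)))
    (p : ℕ → Point) (f : Fin n ≃ Fin n) (hp : IsPinReprWith σ p f)
    (hn : 0 < n) (i₀ : ℕ) (hi₀ : i₀ < r) (h1 : PinInChild b f ⟨0, hn⟩ i₀) :
    ∀ m < r, m ≠ i₀ → ReadInPieces (ChildPins b f m) 1 := by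
  intro m hm hmi₀
  have hslo : SplitsAt σ (b m) := hdec.splitsAt hm.le
  have hshi : SplitsAt σ (b (m + 1)) := hdec.splitsAt hm
  have hchild : b m < b (m + 1) := hdec.2.2.1 m hm
  have hhi : b (m + 1) ≤ n := hdec.2.1 ▸ hdec.le_of_le hm le_rfl
  set S := ChildPins b f m
  have hside : ∀ w ∉ S, (∀ a ∈ S, p w ≺ p a) ∨ (∀ a ∈ S, p a ≺ p w) := by
    intro w hw
    rcases not_and_or.1 hw with hw | hw
    · exact Or.inl fun a ha => (hp.southWest_iff w a).2 (hslo.lt_and_lt (by omega) ha.1)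
    · exact Or.inr fun a ha => (hp.southWest_iff a w).2 (hshi.lt_and_lt ha.2 (by omega))
  have h0 : ⟨0, hn⟩ ∉ S := fun h0 => hmi₀ (hdec.eq_of_mem_Ico hm hi₀ h0 h1)
  have hS : S.Nonempty := ⟨f.symm ⟨b m, by omega⟩, by simp [S, ChildPins, PinInChild, hchild]⟩
  refine readInPieces_one_of_ordConnected hS <| Set.ordConnected_of_Ioo
    fun a ha c hc _ t ⟨hat, htc⟩ => by_contra fun htS => ?_
  have hS_ne : ∀ u ∈ S, u ≠ t := fun u hu h => htS (h ▸ hu)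
  rcases hp.1.southWest_or_northEast_across hside hn h0 htS with hsw | hne
  · refine absurd (hind m hm) (hp.not_childIndecomp hhi hslo hshi (· < t) ⟨a, ha, hat⟩
      ⟨c, hc, htc.not_gt⟩ fun q u hq hu hqt hut => ?_)
    exact hsw q hq u hu hqt ((not_lt.1 hut).lt_of_ne (hS_ne u hu).symm)
  · refine absurd (hind m hm) (hp.not_childIndecomp hhi hslo hshi (t < ·) ⟨c, hc, htc⟩
      ⟨a, ha, hat.not_gt⟩ fun u q hu hq htu hqt => ?_)
    exact hne q hq u hu ((not_lt.1 hqt).lt_of_ne (hS_ne q hq)) htu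

/-- Let `σ = ⊕[π_1, …, π_r]` with nonempty ⊕-indecomposable children,
`p` a pin representation of `σ` and `i₀` the index of the child containing the first
pin. Every child with index different from `i₀` is read in one piece by `p`. -/
theorem statement_11 {n r : ℕ} (σ : Equiv.Perm (Fin n)) (b : ℕ → ℕ) (hr : 2 ≤ r)
    (hdec : SumDecomp σ r b)
    (hind : ∀ k < r, ChildIndecomp σ (b k) (b (k + 1)))
    (p : ℕ → Point) (f : Fin n ≃ Fin n) (hp : IsPinReprWith σ p f)
    (hn : 0 < n) (i₀ : ℕ) (hi₀ : i₀ < r) (h1 : PinInChild b f ⟨0, hn⟩ i₀) :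
    ∀ m < r, m ≠ i₀ → ReadInPieces (ChildPins b f m) 1 :=
  statement_11_general σ b hdec hind p f hp hn i₀ hi₀ h1

end PinStmt
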